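/- The Petersen graph has edge chromatic number 4; in particular, it admits no proper edge 3-coloring. -/

import Mathlib

def IsProperEdgeColoring {V : Type*} (G : SimpleGraph V) {k : ℕ}
    (c : Sym2 V → Fin k) : Prop :=
  ∀ e ∈ G.edgeSet, ∀ f ∈ G.edgeSet, e ≠ f → (∃ v, v ∈ e ∧ v ∈ f) → c e ≠ c f

def EdgeColorable {V : Type*} (G : SimpleGraph V) (k : ℕ) : Prop :=
  ∃ c : Sym2 V → Fin k, IsProperEdgeColoring G c

noncomputable def edgeChromaticNumber {V : Type*} (G : SimpleGraph V) : ℕ :=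
  sInf {k | EdgeColorable G k}

/-- The Petersen graph as the Kneser graph K(5,2): vertices are 2-element
subsets of a 5-element set, adjacent iff disjoint. -/
def petersen : SimpleGraph {s : Finset (Fin 5) // s.card = 2} where
  Adj s t := Disjoint s.val t.val
  symm := ⟨fun s t h => h.symm⟩
  loopless := ⟨by
    intro s h
    beta_reduce at h
    rw [disjoint_self] at h
    have h2 := s.2
    rw [h] at h2
    simp at h2⟩

/-!
Both bounds come from an exhaustive backtracking search over the fifteen edges, whose soundness
and completeness are proved for an arbitrary symmetric, irreflexive conflict relation: the
search for proper 3-edge-colourings dies out, the one for 4 colours finds a colouring.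
-/

namespace List

variable {α : Type*} (r : α → α → Prop) [DecidableRel r] (k : ℕ)

/-- In each colouring `l`, `l[i]` is the colour of the `i`-th entry. A new head is checked only
against the later entries, which suffices for symmetric `r`. -/
def properColorings : List α → List (List (Fin k))
  | [] => [[]]
  | x :: xs => (properColorings xs).flatMap fun l =>
      ((finRange k).filter fun a => (xs.zip l).all fun p => decide (r x p.1 → p.2 ≠ a)).map (· :: l)

variable {r k}

theorem mem_properColorings_cons {x : α} {xs : List α} {m : List (Fin k)} :
    m ∈ (x :: xs).properColorings r k ↔
      ∃ a l, l ∈ xs.properColorings r k ∧ (∀ p ∈ xs.zip l, r x p.1 → p.2 ≠ a) ∧ m = a :: l := by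
  simp only [properColorings, mem_flatMap, mem_map, mem_filter, mem_finRange, true_and,
    all_eq_true, decide_eq_true_eq]
  grind

theorem map_mem_properColorings {c : α → Fin k} :
    ∀ {xs : List α}, (∀ x ∈ xs, ∀ y ∈ xs, r x y → c x ≠ c y) →
      xs.map c ∈ xs.properColorings r k
  | [], _ => mem_singleton_self _
  | x :: xs, hc => by
    refine mem_properColorings_cons.2 ⟨c x, xs.map c, ?_, ?_, rfl⟩
    · exact map_mem_properColorings fun y hy z hz =>
        hc y (mem_cons_of_mem _ hy) z (mem_cons_of_mem _ hz)
    · simp only [← map_prod_left_eq_zip, mem_map]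
      rintro _ ⟨y, hy, rfl⟩ hxy
      exact (hc x mem_cons_self y (mem_cons_of_mem _ hy) hxy).symm

theorem exists_map_eq_of_mem_properColorings [DecidableEq α] [Std.Symm r] [Std.Irrefl r]
    [NeZero k] : ∀ {xs : List α} {m : List (Fin k)}, xs.Nodup → m ∈ xs.properColorings r k →
      ∃ c : α → Fin k, xs.map c = m ∧ ∀ x ∈ xs, ∀ y ∈ xs, r x y → c x ≠ c y
  | [], _, _, hm => ⟨fun _ => 0, (eq_of_mem_singleton hm).symm, by simp⟩
  | x :: xs, _, hnd, hm => by
    obtain ⟨a, l, hl, ha, rfl⟩ := mem_properColorings_cons.1 hm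
    obtain ⟨hx, hnd⟩ := nodup_cons.1 hnd
    obtain ⟨c, rfl, hc⟩ := exists_map_eq_of_mem_properColorings hnd hl
    have hax : ∀ y ∈ xs, r x y → a ≠ c y := fun y hy hxy =>
      (ha (y, c y) (map_prod_left_eq_zip ▸ mem_map_of_mem hy) hxy).symm
    have hupd : ∀ y ∈ xs, Function.update c x a y = c y := fun y hy =>
      Function.update_of_ne (ne_of_mem_of_not_mem hy hx) _ _
    refine ⟨Function.update c x a, by simp [map_congr_left hupd], ?_⟩
    simp only [mem_cons]
    rintro y (rfl | hy) z (rfl | hz) hyz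
    · exact absurd hyz (irrefl _)
    · simpa [hupd z hz] using hax z hz hyz
    · simpa [hupd y hy] using (hax y hy (symm_of r hyz)).symm
    · simpa [hupd y hy, hupd z hz] using hc y hy z hz hyz

end List

namespace Sym2

variable {V : Type*}

def Adjacent (e f : Sym2 V) : Prop := e ≠ f ∧ ∃ v, v ∈ e ∧ v ∈ f

instance : Std.Symm (Adjacent (V := V)) :=
  ⟨fun _ _ ⟨hne, v, he, hf⟩ => ⟨hne.symm, v, hf, he⟩⟩

instance : Std.Irrefl (Adjacent (V := V)) :=
  ⟨fun _ h => h.1 rfl⟩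

instance [Fintype V] [DecidableEq V] : DecidableRel (Adjacent (V := V)) :=
  fun _ _ => inferInstanceAs (Decidable (_ ∧ _))

end Sym2

section EdgeColoring

variable {V : Type*} {G : SimpleGraph V} {k : ℕ}

theorem EdgeColorable.mono {l : ℕ} (hkl : k ≤ l) (h : EdgeColorable G k) : EdgeColorable G l :=
  let ⟨c, hc⟩ := h
  ⟨Fin.castLE hkl ∘ c, fun e he f hf hef hv => (Fin.castLE_injective hkl).ne (hc e he f hf hef hv)⟩

theorem edgeChromaticNumber_eq_succ (h : EdgeColorable G (k + 1)) (h' : ¬ EdgeColorable G k) :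
    edgeChromaticNumber G = k + 1 :=
  (Nat.sInf_upward_closed_eq_succ_iff (fun _ _ hkl hk => hk.mono hkl) k).2 ⟨h, h'⟩

variable [DecidableRel (Sym2.Adjacent (V := V))] {es : List (Sym2 V)}

theorem not_edgeColorable_of_properColorings_eq_nil (hes : ∀ e ∈ es, e ∈ G.edgeSet)
    (h : es.properColorings Sym2.Adjacent k = []) : ¬ EdgeColorable G k := by
  rintro ⟨c, hc⟩
  have := List.map_mem_properColorings (r := Sym2.Adjacent) (c := c) fun e he f hf hef =>
    hc e (hes e he) f (hes f hf) hef.1 hef.2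
  simp [h] at this

theorem edgeColorable_of_properColorings_ne_nil [DecidableEq V] [NeZero k]
    (hes : ∀ e ∈ G.edgeSet, e ∈ es) (hnd : es.Nodup)
    (h : es.properColorings Sym2.Adjacent k ≠ []) : EdgeColorable G k := by
  obtain ⟨m, hm⟩ := List.exists_mem_of_ne_nil _ h
  obtain ⟨c, -, hc⟩ := List.exists_map_eq_of_mem_properColorings hnd hm
  exact ⟨c, fun e he f hf hef hv => hc e (hes e he) f (hes f hf) ⟨hef, hv⟩⟩

end EdgeColoring

instance : DecidableRel petersen.Adj := fun s t =>
  inferInstanceAs (Decidable (Disjoint s.val t.val))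

def petersenEdges : List (Sym2 {s : Finset (Fin 5) // s.card = 2}) :=
  [s(⟨{0, 1}, rfl⟩, ⟨{2, 3}, rfl⟩), s(⟨{0, 1}, rfl⟩, ⟨{2, 4}, rfl⟩), s(⟨{0, 1}, rfl⟩, ⟨{3, 4}, rfl⟩),
   s(⟨{0, 2}, rfl⟩, ⟨{1, 3}, rfl⟩), s(⟨{0, 2}, rfl⟩, ⟨{1, 4}, rfl⟩), s(⟨{0, 2}, rfl⟩, ⟨{3, 4}, rfl⟩),
   s(⟨{0, 3}, rfl⟩, ⟨{1, 2}, rfl⟩), s(⟨{0, 3}, rfl⟩, ⟨{1, 4}, rfl⟩), s(⟨{0, 3}, rfl⟩, ⟨{2, 4}, rfl⟩),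
   s(⟨{0, 4}, rfl⟩, ⟨{1, 2}, rfl⟩), s(⟨{0, 4}, rfl⟩, ⟨{1, 3}, rfl⟩), s(⟨{0, 4}, rfl⟩, ⟨{2, 3}, rfl⟩),
   s(⟨{1, 2}, rfl⟩, ⟨{3, 4}, rfl⟩), s(⟨{1, 3}, rfl⟩, ⟨{2, 4}, rfl⟩), s(⟨{1, 4}, rfl⟩, ⟨{2, 3}, rfl⟩)]

theorem mem_petersenEdges {e : Sym2 {s : Finset (Fin 5) // s.card = 2}} :
    e ∈ petersenEdges ↔ e ∈ petersen.edgeSet := by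
  revert e
  decide

theorem petersenEdges_nodup : petersenEdges.Nodup := by
  decide

theorem petersen_edgeColorable_four : EdgeColorable petersen 4 :=
  edgeColorable_of_properColorings_ne_nil (fun _ => mem_petersenEdges.2) petersenEdges_nodup
    (by decide)

theorem petersen_not_edgeColorable_three : ¬ EdgeColorable petersen 3 :=
  not_edgeColorable_of_properColorings_eq_nil (fun _ => mem_petersenEdges.1) (by decide)

/-- The Petersen graph has edge chromatic number 4; in particular it has no
proper edge 3-coloring. -/
theorem petersen_edgeChromaticNumber :
    edgeChromaticNumber petersen = 4 ∧ ¬ EdgeColorable petersen 3 :=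
  ⟨edgeChromaticNumber_eq_succ petersen_edgeColorable_four petersen_not_edgeColorable_three,
    petersen_not_edgeColorable_three⟩
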